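/- arXiv:1901.01738 — 2 statements merged into one kernel-verified Lean document; each statement's English description precedes it below -/
import Mathlib

section
/- Let G be a finite group, ε ∈ (0,1], and suppose c(G) ≥ ε. For η ∈ (0,1), let X = {x ∈ G : |x^G| ≤ η⁻¹}. Then |X|/|G| ≥ (ε − η)/(1 − η). -/
open Finset

lemma sum_inv_conj_card (G : Type*) [Group G] [Fintype G] :
    ∑ x : G, ((Nat.card (conjugatesOf x) : ℝ))⁻¹ = (Nat.card (ConjClasses G) : ℝ) := by
  classical
  rw [← Fintype.sum_fiberwise (ConjClasses.mk : G → ConjClasses G)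
    (fun x => ((Nat.card (conjugatesOf x) : ℝ))⁻¹)]
  rw [Nat.card_eq_fintype_card, Fintype.card_eq_sum_ones, Nat.cast_sum]
  refine Finset.sum_congr rfl fun c _ => ?_
  obtain ⟨a, rfl⟩ := ConjClasses.mk_surjective c
  rw [Nat.cast_one]
  have h1 : ∀ x : {x : G // ConjClasses.mk x = ConjClasses.mk a},
      conjugatesOf (x : G) = conjugatesOf a := by
    rintro ⟨x, hx⟩
    exact (ConjClasses.mk_eq_mk_iff_isConj.mp hx).conjugatesOf_eq
  have h2 : Nat.card {x : G // ConjClasses.mk x = ConjClasses.mk a}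
      = Nat.card (conjugatesOf a) := by
    apply Nat.card_congr
    exact Equiv.subtypeEquivRight (fun x => by
      rw [ConjClasses.mk_eq_mk_iff_isConj, isConj_comm]; rfl)
  have hpos : 0 < Nat.card (conjugatesOf a) := by
    have : Nonempty (conjugatesOf a) := ⟨⟨a, mem_conjugatesOf_self⟩⟩
    exact Nat.card_pos
  calc ∑ x : {x : G // ConjClasses.mk x = ConjClasses.mk a},
        ((Nat.card (conjugatesOf (x : G)) : ℝ))⁻¹
      = ∑ _x : {x : G // ConjClasses.mk x = ConjClasses.mk a},
        ((Nat.card (conjugatesOf a) : ℝ))⁻¹ := by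
        refine Finset.sum_congr rfl fun x _ => by rw [h1 x]
    _ = (Nat.card {x : G // ConjClasses.mk x = ConjClasses.mk a} : ℝ)
        * ((Nat.card (conjugatesOf a) : ℝ))⁻¹ := by
        rw [Finset.sum_const, Nat.card_eq_fintype_card]; simp [mul_comm]
    _ = 1 := by
        rw [h2, mul_inv_cancel₀]
        exact_mod_cast hpos.ne'

theorem density_of_small_classes (G : Type*) [Group G] [Fintype G]
    (ε η : ℝ) (hε0 : 0 < ε) (hε1 : ε ≤ 1) (hη0 : 0 < η) (hη1 : η < 1)
    (hc : ε ≤ (commProb G : ℝ)) :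
    (ε - η) / (1 - η) ≤
      (Nat.card {x : G | (Nat.card (conjugatesOf x) : ℝ) ≤ η⁻¹} : ℝ) / (Fintype.card G : ℝ) := by
  classical
  have hn : (0:ℝ) < (Fintype.card G : ℝ) := by
    exact_mod_cast Fintype.card_pos
  set p : G → Prop := fun x => (Nat.card (conjugatesOf x) : ℝ) ≤ η⁻¹ with hp
  set S : Finset G := Finset.univ.filter p with hS
  have hX : (Nat.card {x : G | p x} : ℝ) = (S.card : ℝ) := by
    rw [Nat.card_coe_set_eq, Set.ncard_eq_toFinset_card', Set.toFinset_setOf]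
  -- commProb bound
  have hk : ε * (Fintype.card G : ℝ) ≤ (Nat.card (ConjClasses G) : ℝ) := by
    have h1 : ((commProb G : ℚ) : ℝ)
        = (Nat.card (ConjClasses G) : ℝ) / (Fintype.card G : ℝ) := by
      rw [commProb_def']
      push_cast [Nat.card_eq_fintype_card]
      ring
    rw [h1] at hc
    rw [← le_div_iff₀ hn] at *
    exact hc
  -- pointwise bounds
  have hone : ∀ x : G, ((Nat.card (conjugatesOf x) : ℝ))⁻¹ ≤ 1 := by
    intro x
    have : (1:ℝ) ≤ (Nat.card (conjugatesOf x) : ℝ) := by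
      have : Nonempty (conjugatesOf x) := ⟨⟨x, mem_conjugatesOf_self⟩⟩
      exact_mod_cast Nat.card_pos
    rw [inv_le_one_iff₀]; right; exact this
  have hbig : ∀ x : G, ¬ p x → ((Nat.card (conjugatesOf x) : ℝ))⁻¹ ≤ η := by
    intro x hx
    simp only [hp, not_le] at hx
    have h0 : (0:ℝ) < η⁻¹ := by positivity
    calc ((Nat.card (conjugatesOf x) : ℝ))⁻¹ ≤ (η⁻¹)⁻¹ :=
          inv_anti₀ h0 hx.le
      _ = η := inv_inv η
  have hsplit : (Nat.card (ConjClasses G) : ℝ)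
      ≤ (S.card : ℝ) + η * ((Fintype.card G : ℝ) - (S.card : ℝ)) := by
    rw [← sum_inv_conj_card G, ← Finset.sum_filter_add_sum_filter_not Finset.univ p]
    have hA : ∑ x ∈ Finset.univ.filter p, ((Nat.card (conjugatesOf x) : ℝ))⁻¹
        ≤ (S.card : ℝ) := by
      calc ∑ x ∈ Finset.univ.filter p, ((Nat.card (conjugatesOf x) : ℝ))⁻¹
          ≤ ∑ _x ∈ Finset.univ.filter p, (1:ℝ) :=
            Finset.sum_le_sum fun x _ => hone x
        _ = (S.card : ℝ) := by simp [hS]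
    have hB : ∑ x ∈ Finset.univ.filter (fun x => ¬ p x),
        ((Nat.card (conjugatesOf x) : ℝ))⁻¹
        ≤ η * ((Fintype.card G : ℝ) - (S.card : ℝ)) := by
      calc ∑ x ∈ Finset.univ.filter (fun x => ¬ p x), ((Nat.card (conjugatesOf x) : ℝ))⁻¹
          ≤ ∑ x ∈ Finset.univ.filter (fun x => ¬ p x), η :=
            Finset.sum_le_sum fun x hx => hbig x (Finset.mem_filter.mp hx).2
        _ = ((Finset.univ.filter (fun x => ¬ p x)).card : ℝ) * η := by
            rw [Finset.sum_const, nsmul_eq_mul]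
        _ = η * ((Fintype.card G : ℝ) - (S.card : ℝ)) := by
            have := Finset.card_filter_add_card_filter_not (s := Finset.univ) (p := p)
            rw [Finset.card_univ] at this
            have h' : ((Finset.univ.filter (fun x => ¬ p x)).card : ℝ)
                = (Fintype.card G : ℝ) - (S.card : ℝ) := by
              rw [hS]
              have : (S.card : ℝ) + ((Finset.univ.filter (fun x => ¬ p x)).card : ℝ)
                  = (Fintype.card G : ℝ) := by exact_mod_cast this
              linarith [this]
            rw [h', mul_comm]
    linarith
  rw [hX, div_le_div_iff₀ (by linarith) hn]
  nlinarith [hk, hsplit, hn, S.card.cast_nonneg (α := ℝ)]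
end

section
/- Suppose that for every k there is a constant c_k > 0 such that any finite group G covered by k sets contains a set A in the cover with at least c_k|G|² quadruples (x,y,xy,yx) ∈ A⁴. Then for any sequence (G_n) of finite non-Abelian groups with c(G_n) → 0, the non-commuting Schur numbers satisfy k(G_n) → ∞. -/
/-!
If `c(G) < c_k`, then in any cover of `G` by `k` sets the set supplied by the hypothesis has
more quadruples `(x, y, xy, yx)` than `G` has commuting pairs `(x, y)`, so one of its quadruples
has `xy ≠ yx`. Hence `k ≤ k(G)` as soon as `c(G) < c_k`, which for `G = G_n` holds for all
large `n` because `c(G_n) → 0`.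
-/

/-- `SchurProperty G k` : every cover of `G` by `k` sets contains a set with a
monochromatic quadruple `(x, y, xy, yx)` with `xy ≠ yx`. -/
def SchurProperty (G : Type*) [Group G] (k : ℕ) : Prop :=
  ∀ C : Fin k → Set G, (⋃ i, C i) = Set.univ →
    ∃ i, ∃ x y : G, x ∈ C i ∧ y ∈ C i ∧ x * y ∈ C i ∧ y * x ∈ C i ∧ x * y ≠ y * x

/-- The non-commuting Schur number `k(G)`. -/
noncomputable def nonCommutingSchurNumber (G : Type*) [Group G] : ℕ :=
  sSup {k : ℕ | SchurProperty G k}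

section

variable {M : Type*} [Mul M] [Finite M]

theorem card_commute_eq_commProb_mul_card_sq [Nonempty M] :
    (Nat.card {p : M × M // Commute p.1 p.2} : ℝ) = (commProb M : ℝ) * (Nat.card M : ℝ) ^ 2 := by
  rw [commProb_def]
  push_cast
  exact (div_mul_cancel₀ _ (pow_ne_zero 2 (Nat.cast_ne_zero.2 Nat.card_pos.ne'))).symm

theorem card_schurQuadruples_le_card_commute {A : Set M}
    (hA : ∀ x y, x ∈ A → y ∈ A → x * y ∈ A → y * x ∈ A → x * y = y * x) :
    Nat.card {p : M × M // p.1 ∈ A ∧ p.2 ∈ A ∧ p.1 * p.2 ∈ A ∧ p.2 * p.1 ∈ A} ≤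
      Nat.card {p : M × M // Commute p.1 p.2} :=
  Nat.card_mono (s := {p : M × M | p.1 ∈ A ∧ p.2 ∈ A ∧ p.1 * p.2 ∈ A ∧ p.2 * p.1 ∈ A})
    (t := {p : M × M | Commute p.1 p.2}) (Set.toFinite _)
    fun _ ⟨hx, hy, hxy, hyx⟩ => hA _ _ hx hy hxy hyx

end

section

variable {G : Type*} [Group G]

theorem SchurProperty.le_card [Finite G] {k : ℕ} (hk : SchurProperty G k) : k ≤ Nat.card G := by
  cases nonempty_fintype G
  by_contra! hlt
  obtain ⟨f⟩ : Nonempty (G ↪ Fin k) :=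
    Function.Embedding.nonempty_of_card_le (by simpa [Nat.card_eq_fintype_card] using hlt.le)
  obtain ⟨i, x, y, hx, hy, -, -, hne⟩ := hk (fun i => f ⁻¹' {i}) (by ext g; simp)
  exact hne (by rw [f.injective (hx.trans hy.symm)])

theorem SchurProperty.le_nonCommutingSchurNumber [Finite G] {k : ℕ} (hk : SchurProperty G k) :
    k ≤ nonCommutingSchurNumber G :=
  le_csSup ⟨Nat.card G, fun _ => SchurProperty.le_card⟩ hk

theorem schurProperty_of_commProb_lt [Fintype G] {k : ℕ} {c : ℝ}
    (hcover : ∀ C : Fin k → Set G, (⋃ i, C i) = Set.univ → ∃ i, c * (Fintype.card G : ℝ) ^ 2 ≤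
      (Nat.card {p : G × G // p.1 ∈ C i ∧ p.2 ∈ C i ∧ p.1 * p.2 ∈ C i ∧ p.2 * p.1 ∈ C i} : ℝ))
    (hlt : (commProb G : ℝ) < c) : SchurProperty G k := by
  intro C hC
  obtain ⟨i, hi⟩ := hcover C hC
  refine ⟨i, ?_⟩
  by_contra! hcomm
  have hcard : (0 : ℝ) < (Fintype.card G : ℝ) ^ 2 := by positivity
  have hle : c * (Fintype.card G : ℝ) ^ 2 ≤ (commProb G : ℝ) * (Fintype.card G : ℝ) ^ 2 :=
    calc c * (Fintype.card G : ℝ) ^ 2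
        ≤ _ := hi
      _ ≤ (Nat.card {p : G × G // Commute p.1 p.2} : ℝ) := by
        exact_mod_cast card_schurQuadruples_le_card_commute hcomm
      _ = _ := by rw [card_commute_eq_commProb_mul_card_sq, Nat.card_eq_fintype_card]
  exact (le_of_mul_le_mul_right hle hcard).not_gt hlt

end

theorem schur_numbers_tendsto_atTop_general
    (hmain : ∃ c : ℕ → ℝ, (∀ k, 0 < c k) ∧
      ∀ (k : ℕ) (G : Type) [Group G] [Fintype G] (C : Fin k → Set G),
        (⋃ i, C i) = Set.univ →
          ∃ i, c k * (Fintype.card G : ℝ) ^ 2 ≤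
            (Nat.card {p : G × G //
              p.1 ∈ C i ∧ p.2 ∈ C i ∧ p.1 * p.2 ∈ C i ∧ p.2 * p.1 ∈ C i} : ℝ))
    (G : ℕ → Type) [∀ n, Group (G n)] [∀ n, Fintype (G n)]
    (hc : Filter.Tendsto (fun n => ((commProb (G n) : ℝ))) Filter.atTop (nhds 0)) :
    Filter.Tendsto (fun n => nonCommutingSchurNumber (G n)) Filter.atTop Filter.atTop := by
  obtain ⟨c, hcpos, hmain⟩ := hmain
  refine Filter.tendsto_atTop.2 fun k => ?_
  filter_upwards [hc.eventually (gt_mem_nhds (hcpos k))] with n hn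
  exact (schurProperty_of_commProb_lt (hmain k (G n)) hn).le_nonCommutingSchurNumber

theorem schur_numbers_tendsto_atTop
    (hmain : ∃ c : ℕ → ℝ, (∀ k, 0 < c k) ∧
      ∀ (k : ℕ) (G : Type) [Group G] [Fintype G] (C : Fin k → Set G),
        (⋃ i, C i) = Set.univ →
          ∃ i, c k * (Fintype.card G : ℝ) ^ 2 ≤
            (Nat.card {p : G × G //
              p.1 ∈ C i ∧ p.2 ∈ C i ∧ p.1 * p.2 ∈ C i ∧ p.2 * p.1 ∈ C i} : ℝ))
    (G : ℕ → Type) [∀ n, Group (G n)] [∀ n, Fintype (G n)]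
    (hna : ∀ n, ¬ ∀ x y : G n, x * y = y * x)
    (hc : Filter.Tendsto (fun n => ((commProb (G n) : ℝ))) Filter.atTop (nhds 0)) :
    Filter.Tendsto (fun n => nonCommutingSchurNumber (G n)) Filter.atTop Filter.atTop :=
  schur_numbers_tendsto_atTop_general hmain G hc
end
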